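/- arXiv:2307.01074 — 6 statements merged into one kernel-verified Lean document; each statement's English description precedes it below -/
import Mathlib

section
/- Let A and B be the operators on Schwartz functions on [0,∞) defined by (Aφ)(x) = ∫₀^∞ φ(x + y²) dy and (Bψ)(x) = -(4/π) ∫₀^∞ ψ'(x + y²) dy. Then B ∘ A = id, i.e. for every Schwartz function ψ on [0,∞) and every x ≥ 0, (B(Aψ))(x) = ψ(x). -/
set_option maxHeartbeats 1000000


open Real MeasureTheory

/-- The operator `A`: `(Aφ)(x) = ∫₀^∞ φ(x + y²) dy`. -/
noncomputable def opA (φ : ℝ → ℝ) (x : ℝ) : ℝ := ∫ y in Set.Ioi (0 : ℝ), φ (x + y ^ 2)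

/-- The operator `B`: `(Bψ)(x) = -(4/π) ∫₀^∞ ψ'(x + y²) dy`. -/
noncomputable def opB (ψ : ℝ → ℝ) (x : ℝ) : ℝ :=
  -(4 / π) * ∫ y in Set.Ioi (0 : ℝ), deriv ψ (x + y ^ 2)

theorem opB_comp_opA_eq_id (ψ : ℝ → ℝ) (hsmooth : ContDiff ℝ (⊤ : ℕ∞) ψ)
    (hdecay : ∀ n k : ℕ, ∃ C : ℝ, ∀ x : ℝ, 0 ≤ x →
      x ^ k * |iteratedDeriv n ψ x| ≤ C) :
    ∀ x : ℝ, 0 ≤ x → opB (opA ψ) x = ψ x := by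
  -- Basic facts about ψ
  have hcontψ : Continuous ψ := hsmooth.continuous
  have hcontd : Continuous (deriv ψ) := hsmooth.continuous_deriv (by simp)
  have hd : ∀ s : ℝ, HasDerivAt ψ (deriv ψ s) s :=
    fun s => (hsmooth.differentiable (by simp) s).hasDerivAt
  -- Decay bound for deriv ψ
  obtain ⟨C0, hC0⟩ := hdecay 1 0
  obtain ⟨C1, hC1⟩ := hdecay 1 1
  obtain ⟨C2, hC2⟩ := hdecay 1 2
  set C : ℝ := C0 + 2 * C1 + C2 with hCdef
  have hidone : iteratedDeriv 1 ψ = deriv ψ := iteratedDeriv_one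
  rw [hidone] at hC0 hC1 hC2
  have hC : ∀ s : ℝ, 0 ≤ s → (1 + s) ^ 2 * |deriv ψ s| ≤ C := by
    intro s hs
    have h0 := hC0 s hs
    have h1 := hC1 s hs
    have h2 := hC2 s hs
    simp only [pow_zero, pow_one, one_mul] at h0 h1 h2
    nlinarith [abs_nonneg (deriv ψ s)]
  have hCnonneg : 0 ≤ C := by
    have := hC 0 le_rfl
    have := abs_nonneg (deriv ψ 0)
    nlinarith
  -- Decay bound for ψ
  obtain ⟨D0, hD0⟩ := hdecay 0 0
  obtain ⟨D1, hD1⟩ := hdecay 0 1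
  set D : ℝ := D0 + D1 with hDdef
  have hidzero : iteratedDeriv 0 ψ = ψ := iteratedDeriv_zero
  rw [hidzero] at hD0 hD1
  have hD : ∀ s : ℝ, 0 ≤ s → (1 + s) * |ψ s| ≤ D := by
    intro s hs
    have h0 := hD0 s hs
    have h1 := hD1 s hs
    simp only [pow_zero, pow_one, one_mul] at h0 h1
    nlinarith [abs_nonneg (ψ s)]
  -- Derived pointwise bounds
  have hbound_d : ∀ t y : ℝ, 0 ≤ t → |deriv ψ (t + y ^ 2)| ≤ C * (1 + y ^ 2)⁻¹ := by
    intro t y ht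
    have hs : (0:ℝ) ≤ t + y ^ 2 := by positivity
    have h := hC (t + y ^ 2) hs
    have hy : (0:ℝ) < 1 + y ^ 2 := by positivity
    rw [show C * (1 + y ^ 2)⁻¹ = C / (1 + y ^ 2) by ring, le_div_iff₀ hy]
    calc |deriv ψ (t + y ^ 2)| * (1 + y ^ 2)
          ≤ (1 + (t + y ^ 2)) ^ 2 * |deriv ψ (t + y ^ 2)| := by
            nlinarith [abs_nonneg (deriv ψ (t + y ^ 2)), sq_nonneg y, sq_nonneg (t + y^2)]
        _ ≤ C := h
  have hbound_ψ : ∀ t y : ℝ, 0 ≤ t → |ψ (t + y ^ 2)| ≤ D * (1 + y ^ 2)⁻¹ := by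
    intro t y ht
    have hs : (0:ℝ) ≤ t + y ^ 2 := by positivity
    have h := hD (t + y ^ 2) hs
    have hy : (0:ℝ) < 1 + y ^ 2 := by positivity
    rw [show D * (1 + y ^ 2)⁻¹ = D / (1 + y ^ 2) by ring, le_div_iff₀ hy]
    calc |ψ (t + y ^ 2)| * (1 + y ^ 2)
        ≤ (1 + (t + y ^ 2)) * |ψ (t + y ^ 2)| := by
          nlinarith [abs_nonneg (ψ (t + y ^ 2)), sq_nonneg y]
      _ ≤ D := h
  -- Integrable comparison function
  have hint_cmp : ∀ K : ℝ, Integrable (fun y : ℝ => K * (1 + y ^ 2)⁻¹) :=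
    fun K => integrable_inv_one_add_sq.const_mul K
  have habs_cmp : ∀ (K : ℝ) (hK : 0 ≤ K) (y : ℝ),
      ‖K * (1 + y ^ 2)⁻¹‖ = K * (1 + y ^ 2)⁻¹ := by
    intro K hK y
    rw [Real.norm_eq_abs, abs_of_nonneg (by positivity)]
  -- Integrability of y ↦ ψ (t + y²) on (0, ∞)
  have hintψ : ∀ t : ℝ, 0 ≤ t → IntegrableOn (fun y : ℝ => ψ (t + y ^ 2)) (Set.Ioi 0) := by
    intro t ht
    refine Integrable.mono ((hint_cmp D).restrict) ?_ ?_
    · exact (hcontψ.comp (continuous_const.add (continuous_pow 2))).aestronglyMeasurable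
    · refine Filter.Eventually.of_forall fun y => ?_
      have hDnn : 0 ≤ D := le_trans (by positivity) (hD 0 le_rfl)
      rw [Real.norm_eq_abs, habs_cmp D hDnn y]
      exact hbound_ψ t y ht
  -- Integrability of y ↦ deriv ψ (t + y²) on (0, ∞)
  have hintd : ∀ t : ℝ, 0 ≤ t → IntegrableOn (fun y : ℝ => deriv ψ (t + y ^ 2)) (Set.Ioi 0) := by
    intro t ht
    refine Integrable.mono ((hint_cmp C).restrict) ?_ ?_
    · exact (hcontd.comp (continuous_const.add (continuous_pow 2))).aestronglyMeasurable
    · refine Filter.Eventually.of_forall fun y => ?_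
      rw [Real.norm_eq_abs, habs_cmp C hCnonneg y]
      exact hbound_d t y ht
  -- Differentiation under the integral sign
  have hderivA : ∀ t : ℝ, 0 < t →
      HasDerivAt (opA ψ) (∫ y in Set.Ioi (0:ℝ), deriv ψ (t + y ^ 2)) t := by
    intro t ht
    have key := hasDerivAt_integral_of_dominated_loc_of_deriv_le (F := fun u y => ψ (u + y ^ 2))
      (F' := fun u y => deriv ψ (u + y ^ 2)) (x₀ := t)
      (bound := fun y => C * (1 + y ^ 2)⁻¹)
      (μ := volume.restrict (Set.Ioi (0:ℝ))) (Metric.ball_mem_nhds t (by linarith : (0:ℝ) < t / 2))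
      (Filter.Eventually.of_forall fun u =>
        ((hcontψ.comp (continuous_const.add (continuous_pow 2)) : Continuous fun y : ℝ => ψ (u + y ^ 2))).aestronglyMeasurable)
      (hintψ t ht.le)
      ((hcontd.comp (continuous_const.add (continuous_pow 2)) : Continuous fun y : ℝ => deriv ψ (t + y ^ 2)).aestronglyMeasurable)
      (Filter.Eventually.of_forall fun y => fun u hu => ?_)
      ((hint_cmp C).restrict)
      (Filter.Eventually.of_forall fun y => fun u hu => ?_)
    · exact key.2
    · -- bound
      have hu0 : 0 ≤ u := by
        have := Metric.mem_ball.mp hu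
        rw [Real.dist_eq, abs_lt] at this
        linarith
      rw [Real.norm_eq_abs]
      exact hbound_d u y hu0
    · -- differentiability
      have := (hd (u + y ^ 2)).comp u ((hasDerivAt_id u).add_const (y ^ 2))
      simpa [Function.comp_def] using this
  -- Fix x ≥ 0
  intro x hx
  -- Step B: rewrite opB (opA ψ) x as an iterated integral
  have hstepB : opB (opA ψ) x =
      -(4 / π) * ∫ z in Set.Ioi (0:ℝ), ∫ y in Set.Ioi (0:ℝ), deriv ψ (x + z ^ 2 + y ^ 2) := by
    unfold opB
    congr 1
    refine setIntegral_congr_fun measurableSet_Ioi fun z hz => ?_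
    have hz' : (0:ℝ) < x + z ^ 2 := by
      have : (0:ℝ) < z := hz
      positivity
    exact (hderivA (x + z ^ 2) hz').deriv
  -- The function on ℝ² and its integrability
  set f : ℝ × ℝ → ℝ := fun p => deriv ψ (x + p.1 ^ 2 + p.2 ^ 2) with hfdef
  have hfmeas : Continuous f := hcontd.comp ((continuous_const.add (continuous_fst.pow 2)).add (continuous_snd.pow 2))
  have hfint : Integrable f := by
    have hbnd : Integrable (fun p : ℝ × ℝ => (C * (1 + p.1 ^ 2)⁻¹) * (1 + p.2 ^ 2)⁻¹) := by
      rw [Measure.volume_eq_prod]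
      exact (hint_cmp C).mul_prod integrable_inv_one_add_sq
    refine hbnd.mono hfmeas.aestronglyMeasurable ?_
    refine Filter.Eventually.of_forall fun p => ?_
    rw [Real.norm_eq_abs, Real.norm_eq_abs]
    have h1 : (0:ℝ) < 1 + p.1 ^ 2 := by positivity
    have h2 : (0:ℝ) < 1 + p.2 ^ 2 := by positivity
    have hs : (0:ℝ) ≤ x + p.1 ^ 2 + p.2 ^ 2 := by positivity
    have h := hC (x + p.1 ^ 2 + p.2 ^ 2) hs
    have habs : |C * (1 + p.1 ^ 2)⁻¹ * (1 + p.2 ^ 2)⁻¹| =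
        C * (1 + p.1 ^ 2)⁻¹ * (1 + p.2 ^ 2)⁻¹ := abs_of_nonneg (by positivity)
    rw [habs]
    rw [show C * (1 + p.1 ^ 2)⁻¹ * (1 + p.2 ^ 2)⁻¹ = C / ((1 + p.1 ^ 2) * (1 + p.2 ^ 2)) by
      field_simp]
    rw [le_div_iff₀ (by positivity)]
    have key : (1 + p.1 ^ 2) * (1 + p.2 ^ 2) ≤ (1 + (x + p.1 ^ 2 + p.2 ^ 2)) ^ 2 := by
      nlinarith [sq_nonneg p.1, sq_nonneg p.2, mul_nonneg (sq_nonneg p.1) (sq_nonneg p.2),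
        mul_nonneg hx hx, mul_nonneg hx (sq_nonneg p.1), mul_nonneg hx (sq_nonneg p.2)]
    calc |f p| * ((1 + p.1 ^ 2) * (1 + p.2 ^ 2))
        ≤ (1 + (x + p.1 ^ 2 + p.2 ^ 2)) ^ 2 * |f p| := by
          have := mul_le_mul_of_nonneg_left key (abs_nonneg (f p))
          nlinarith [this]
      _ ≤ C := h
  -- Step C: iterated integral = double integral over the quarter plane
  have hstepC : (∫ z in Set.Ioi (0:ℝ), ∫ y in Set.Ioi (0:ℝ), deriv ψ (x + z ^ 2 + y ^ 2)) =
      ∫ p in Set.Ioi (0:ℝ) ×ˢ Set.Ioi (0:ℝ), f p := by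
    rw [Measure.volume_eq_prod]
    exact (setIntegral_prod f (hfint.integrableOn.congr_set_ae (by
      rw [Measure.volume_eq_prod]; exact Filter.EventuallyEq.rfl))).symm
  -- Step D: polar coordinates
  have hstepD : (∫ p in Set.Ioi (0:ℝ) ×ˢ Set.Ioi (0:ℝ), f p) =
      (∫ r in Set.Ioi (0:ℝ), r * deriv ψ (x + r ^ 2)) * (π / 2) := by
    have hQ : MeasurableSet (Set.Ioi (0:ℝ) ×ˢ Set.Ioi (0:ℝ)) :=
      measurableSet_Ioi.prod measurableSet_Ioi
    rw [← integral_indicator hQ, ← integral_comp_polarCoord_symm]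
    have hcongr : ∀ p ∈ polarCoord.target,
        p.1 • (Set.Ioi (0:ℝ) ×ˢ Set.Ioi (0:ℝ)).indicator f (polarCoord.symm p) =
          p.1 * deriv ψ (x + p.1 ^ 2) *
            (Set.Ioo (0:ℝ) (π / 2)).indicator (fun _ => (1:ℝ)) p.2 := by
      rintro ⟨r, θ⟩ ⟨hr, hθ⟩
      simp only [Set.mem_Ioi] at hr
      simp only [Set.mem_Ioo] at hθ
      have hsymm : polarCoord.symm (r, θ) = (r * cos θ, r * sin θ) := rfl
      by_cases hθ' : θ ∈ Set.Ioo (0:ℝ) (π / 2)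
      · obtain ⟨hθ1, hθ2⟩ := hθ'
        have hcos : 0 < cos θ := cos_pos_of_mem_Ioo ⟨by linarith [pi_pos], hθ2⟩
        have hsin : 0 < sin θ := sin_pos_of_pos_of_lt_pi hθ1 (by linarith [pi_pos])
        have hmem : polarCoord.symm (r, θ) ∈ Set.Ioi (0:ℝ) ×ˢ Set.Ioi (0:ℝ) := by
          rw [hsymm, Set.mem_prod]
          exact ⟨mul_pos hr hcos, mul_pos hr hsin⟩
        rw [Set.indicator_of_mem hmem, Set.indicator_of_mem (Set.mem_Ioo.mpr ⟨hθ1, hθ2⟩)]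
        simp only [hfdef, hsymm, smul_eq_mul, mul_one]
        congr 2
        nlinarith [sin_sq_add_cos_sq θ]
      · have hnot : polarCoord.symm (r, θ) ∉ Set.Ioi (0:ℝ) ×ˢ Set.Ioi (0:ℝ) := by
          rw [hsymm]
          rintro ⟨h1, h2⟩
          simp only [Set.mem_Ioi] at h1 h2
          rcases le_or_gt θ 0 with h | h
          · have : sin θ ≤ 0 := sin_nonpos_of_nonpos_of_neg_pi_le h hθ.1.le
            nlinarith
          · have h2 : π / 2 ≤ θ := by
              by_contra hc
              push_neg at hc
              exact hθ' ⟨h, hc⟩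
            have : cos θ ≤ 0 := cos_nonpos_of_pi_div_two_le_of_le h2 (by linarith [hθ.2, pi_pos])
            nlinarith
        rw [Set.indicator_of_notMem hnot, Set.indicator_of_notMem hθ']
        simp
    rw [setIntegral_congr_fun (polarCoord.open_target.measurableSet) hcongr]
    have htarget : polarCoord.target = Set.Ioi (0:ℝ) ×ˢ Set.Ioo (-π) π := rfl
    rw [htarget, Measure.volume_eq_prod,
      setIntegral_prod_mul (fun r : ℝ => r * deriv ψ (x + r ^ 2))
        (fun θ : ℝ => (Set.Ioo (0:ℝ) (π / 2)).indicator (fun _ => (1:ℝ)) θ)]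
    congr 1
    rw [setIntegral_indicator measurableSet_Ioo]
    have hsub : Set.Ioo (-π) π ∩ Set.Ioo (0:ℝ) (π / 2) = Set.Ioo (0:ℝ) (π / 2) := by
      apply Set.inter_eq_self_of_subset_right
      exact Set.Ioo_subset_Ioo (by linarith [pi_pos]) (by linarith [pi_pos])
    rw [hsub, setIntegral_const, smul_eq_mul, mul_one,
      Real.volume_real_Ioo_of_le (by linarith [pi_pos] : (0:ℝ) ≤ π / 2)]
    ring
  -- Step E: the radial integral
  have hstepE : (∫ r in Set.Ioi (0:ℝ), r * deriv ψ (x + r ^ 2)) = -(ψ x) / 2 := by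
    have hint' : IntegrableOn (fun r : ℝ => r * deriv ψ (x + r ^ 2)) (Set.Ioi 0) := by
      refine Integrable.mono ((hint_cmp C).restrict) ?_ ?_
      · exact (continuous_id.mul (hcontd.comp (continuous_const.add (continuous_pow 2)))).aestronglyMeasurable
      · refine Filter.Eventually.of_forall fun r => ?_
        rw [Real.norm_eq_abs, habs_cmp C hCnonneg r, abs_mul]
        have hs : (0:ℝ) ≤ x + r ^ 2 := by positivity
        have h := hC (x + r ^ 2) hs
        have hr2 : (0:ℝ) < 1 + r ^ 2 := by positivity
        rw [show C * (1 + r ^ 2)⁻¹ = C / (1 + r ^ 2) by ring, le_div_iff₀ hr2]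
        have key : |r| * (1 + r ^ 2) ≤ (1 + (x + r ^ 2)) ^ 2 := by
          nlinarith [sq_nonneg (1 - |r|), sq_abs r, abs_nonneg r, sq_nonneg r,
            mul_nonneg hx (sq_nonneg r), mul_nonneg hx hx]
        calc |r| * |deriv ψ (x + r ^ 2)| * (1 + r ^ 2)
            ≤ (1 + (x + r ^ 2)) ^ 2 * |deriv ψ (x + r ^ 2)| := by
              have := mul_le_mul_of_nonneg_left key (abs_nonneg (deriv ψ (x + r ^ 2)))
              nlinarith [this]
          _ ≤ C := h
    have hderiv2 : ∀ r ∈ Set.Ici (0:ℝ),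
        HasDerivAt (fun r : ℝ => ψ (x + r ^ 2) / 2) (r * deriv ψ (x + r ^ 2)) r := by
      intro r _
      have hinner : HasDerivAt (fun r : ℝ => x + r ^ 2) (2 * r) r := by
        simpa using ((hasDerivAt_pow 2 r).const_add x)
      have := ((hd (x + r ^ 2)).comp r hinner).div_const 2
      exact this.congr_deriv (by ring)
    have htend : Filter.Tendsto (fun r : ℝ => ψ (x + r ^ 2) / 2) Filter.atTop (nhds 0) := by
      have hg : Filter.Tendsto (fun r : ℝ => D * (1 + r ^ 2)⁻¹ / 2)
          Filter.atTop (nhds 0) := by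
        have h1 : Filter.Tendsto (fun r : ℝ => 1 + r ^ 2) Filter.atTop Filter.atTop :=
          Filter.tendsto_atTop_add_const_left _ 1 (Filter.tendsto_pow_atTop two_ne_zero)
        have h2 := h1.inv_tendsto_atTop
        have h3 := (h2.const_mul D).div_const 2
        simpa using h3
      refine squeeze_zero_norm (fun r => ?_) hg
      rw [Real.norm_eq_abs, abs_div, abs_two]
      linarith [hbound_ψ x r hx]
    have := integral_Ioi_of_hasDerivAt_of_tendsto' hderiv2 hint' htend
    rw [this, show x + 0 ^ 2 = x by ring]
    ring
  rw [hstepB, hstepC, hstepD, hstepE]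
  have hπ : π ≠ 0 := pi_ne_zero
  field_simp
  ring
end

section
/- Let 0 ≤ a ≤ b, t > 0, and h_t(λ) = (t/√π) ∫_a^b exp(-t²(λ-ρ)²) dρ. For λ > b one has |h_t(λ)| ≤ s(t(λ-b)) with s(ρ) = exp(-ρ²)/(2√π·ρ), and for a < λ < b one has |h_t(λ) - 1| ≤ s(t(λ-a)) + s(t(b-λ)). -/
/-!
After the substitution `u = t (λ - ρ)`, `√π h_t(λ)` is the integral of `exp (-u²)` over
`[t (λ - b), t (λ - a)]`. For `λ > b` this interval lies in the tail `(t (λ - b), ∞)`; for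
`a < λ < b` its complement is the union of the tails `(-∞, -t (b - λ)]` and `(t (λ - a), ∞)`,
and the total mass is `√π`. Each tail is bounded by the Mills-ratio estimate
`∫_c^∞ e^{-u²} du ≤ ∫_c^∞ (u / c) e^{-u²} du = e^{-c²} / (2c)`.
-/

open Real MeasureTheory Set Filter

lemma integrable_exp_neg_sq : Integrable fun u : ℝ => exp (-u ^ 2) := by
  simpa using integrable_exp_neg_mul_sq one_pos

lemma integral_Ioi_mul_exp_neg_sq (c : ℝ) :
    ∫ u in Ioi c, u * exp (-u ^ 2) = exp (-c ^ 2) / 2 := by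
  have hderiv :
      ∀ x ∈ Ioi c, HasDerivAt (fun u : ℝ => -exp (-u ^ 2) / 2) (x * exp (-x ^ 2)) x := by
    intro x _
    have hsq : HasDerivAt (fun u : ℝ => -u ^ 2) (-(2 * x)) x :=
      (hasDerivAt_pow 2 x).fun_neg.congr_deriv (by ring)
    exact (hsq.exp.fun_neg.div_const 2).congr_deriv (by ring)
  have hlim : Tendsto (fun u : ℝ => -exp (-u ^ 2) / 2) atTop (nhds 0) := by
    have hsq : Tendsto (fun u : ℝ => -u ^ 2) atTop atBot :=
      tendsto_neg_atTop_atBot.comp (tendsto_pow_atTop two_ne_zero)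
    simpa using (tendsto_exp_atBot.comp hsq).neg.div_const 2
  have hint : IntegrableOn (fun u : ℝ => u * exp (-u ^ 2)) (Ioi c) := by
    simpa using (integrable_mul_exp_neg_mul_sq one_pos).integrableOn
  rw [integral_Ioi_of_hasDerivAt_of_tendsto (by fun_prop) hderiv hint hlim]
  ring

lemma integral_Ioi_exp_neg_sq_le {c : ℝ} (hc : 0 < c) :
    ∫ u in Ioi c, exp (-u ^ 2) ≤ exp (-c ^ 2) / (2 * c) := by
  have hint : IntegrableOn (fun u : ℝ => u / c * exp (-u ^ 2)) (Ioi c) := by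
    simpa [div_mul_eq_mul_div] using
      ((integrable_mul_exp_neg_mul_sq one_pos).div_const c).integrableOn
  calc ∫ u in Ioi c, exp (-u ^ 2)
      ≤ ∫ u in Ioi c, u / c * exp (-u ^ 2) := by
        refine setIntegral_mono_on integrable_exp_neg_sq.integrableOn hint measurableSet_Ioi
          fun u hu => le_mul_of_one_le_left (exp_pos _).le ?_
        exact (one_le_div hc).2 (le_of_lt hu)
    _ = (∫ u in Ioi c, u * exp (-u ^ 2)) / c := by
        rw [← integral_div]
        simp only [div_mul_eq_mul_div]
    _ = exp (-c ^ 2) / (2 * c) := by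
        rw [integral_Ioi_mul_exp_neg_sq, div_div]

lemma integral_Iic_neg_exp_neg_sq (c : ℝ) :
    ∫ u in Iic (-c), exp (-u ^ 2) = ∫ u in Ioi c, exp (-u ^ 2) := by
  simp [← integral_comp_neg_Ioi c fun u : ℝ => exp (-u ^ 2)]

lemma integral_sub_intervalIntegral {E : Type*} [NormedAddCommGroup E] [NormedSpace ℝ E]
    {f : ℝ → E} (hf : Integrable f) (x y : ℝ) :
    (∫ u, f u) - ∫ u in x..y, f u = (∫ u in Iic x, f u) + ∫ u in Ioi y, f u := by
  rw [← intervalIntegral.integral_Iic_sub_Iic hf.integrableOn hf.integrableOn,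
    ← intervalIntegral.integral_Iic_add_Ioi (b := y) hf.integrableOn hf.integrableOn]
  abel

lemma abs_intervalIntegral_exp_neg_sq_le {c d : ℝ} (hc : 0 < c) (hcd : c ≤ d) :
    |∫ u in c..d, exp (-u ^ 2)| ≤ exp (-c ^ 2) / (2 * c) := by
  rw [abs_of_nonneg (intervalIntegral.integral_nonneg hcd fun u _ => (exp_pos _).le),
    intervalIntegral.integral_of_le hcd]
  refine le_trans ?_ (integral_Ioi_exp_neg_sq_le hc)
  exact setIntegral_mono_set integrable_exp_neg_sq.integrableOn
    (Eventually.of_forall fun u => (exp_pos _).le) Ioc_subset_Ioi_self.eventuallyLE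

lemma abs_intervalIntegral_exp_neg_sq_sub_sqrt_pi_le {c d : ℝ} (hc : 0 < c) (hd : 0 < d) :
    |(∫ u in -c..d, exp (-u ^ 2)) - √π| ≤
      exp (-c ^ 2) / (2 * c) + exp (-d ^ 2) / (2 * d) := by
  have htails := integral_sub_intervalIntegral integrable_exp_neg_sq (-c) d
  rw [integral_Iic_neg_exp_neg_sq,
    show ∫ u, exp (-u ^ 2) = √π by simpa using integral_gaussian 1] at htails
  have hnonneg (x : ℝ) : 0 ≤ ∫ u in Ioi x, exp (-u ^ 2) :=
    setIntegral_nonneg measurableSet_Ioi fun u _ => (exp_pos _).le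
  rw [abs_sub_comm, htails, abs_of_nonneg (add_nonneg (hnonneg c) (hnonneg d))]
  exact add_le_add (integral_Ioi_exp_neg_sq_le hc) (integral_Ioi_exp_neg_sq_le hd)

lemma mul_integral_exp_neg_sq_mul_sub {t : ℝ} (ht : t ≠ 0) (a b l : ℝ) :
    t * ∫ ρ in a..b, exp (-t ^ 2 * (l - ρ) ^ 2) =
      ∫ u in t * (l - b)..t * (l - a), exp (-u ^ 2) := by
  have hsq (ρ : ℝ) : -t ^ 2 * (l - ρ) ^ 2 = -(t * (l - ρ)) ^ 2 := by ring
  simp only [hsq]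
  rw [intervalIntegral.integral_comp_sub_left (fun x => exp (-(t * x) ^ 2)) l,
    intervalIntegral.integral_comp_mul_left (fun u => exp (-u ^ 2)) ht, smul_eq_mul,
    ← mul_assoc, mul_inv_cancel₀ ht, one_mul]

theorem gaussian_mollified_indicator_right_tail_and_interior_general (a b t : ℝ)
    (hab : a ≤ b) (ht : 0 < t) :
    (∀ l : ℝ, b < l →
      |(t / Real.sqrt π) * ∫ ρ in a..b, Real.exp (-t ^ 2 * (l - ρ) ^ 2)| ≤
        Real.exp (-(t * (l - b)) ^ 2) / (2 * Real.sqrt π * (t * (l - b)))) ∧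
    (∀ l : ℝ, a < l → l < b →
      |((t / Real.sqrt π) * ∫ ρ in a..b, Real.exp (-t ^ 2 * (l - ρ) ^ 2)) - 1| ≤
        Real.exp (-(t * (l - a)) ^ 2) / (2 * Real.sqrt π * (t * (l - a))) +
          Real.exp (-(t * (b - l)) ^ 2) / (2 * Real.sqrt π * (t * (b - l)))) := by
  have hπ : 0 < √π := sqrt_pos.2 pi_pos
  have hscale (l : ℝ) : (t / √π) * ∫ ρ in a..b, exp (-t ^ 2 * (l - ρ) ^ 2) =
      (∫ u in t * (l - b)..t * (l - a), exp (-u ^ 2)) / √π := by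
    rw [div_mul_eq_mul_div, mul_integral_exp_neg_sq_mul_sub ht.ne']
  have hnormalize (c : ℝ) : exp (-c ^ 2) / (2 * c) / √π = exp (-c ^ 2) / (2 * √π * c) := by
    rw [div_div, mul_right_comm]
  refine ⟨fun l hl => ?_, fun l hla hlb => ?_⟩
  · rw [hscale, abs_div, abs_of_pos hπ, ← hnormalize]
    gcongr
    exact abs_intervalIntegral_exp_neg_sq_le (by nlinarith) (by nlinarith)
  · rw [hscale, div_sub_one hπ.ne', abs_div, abs_of_pos hπ, ← hnormalize, ← hnormalize,
      ← add_div, show t * (l - b) = -(t * (b - l)) by ring, add_comm]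
    gcongr
    exact abs_intervalIntegral_exp_neg_sq_sub_sqrt_pi_le (by nlinarith) (by nlinarith)

theorem gaussian_mollified_indicator_right_tail_and_interior (a b t : ℝ) (ha : 0 ≤ a)
    (hab : a ≤ b) (ht : 0 < t) :
    (∀ l : ℝ, b < l →
      |(t / Real.sqrt π) * ∫ ρ in a..b, Real.exp (-t ^ 2 * (l - ρ) ^ 2)| ≤
        Real.exp (-(t * (l - b)) ^ 2) / (2 * Real.sqrt π * (t * (l - b)))) ∧
    (∀ l : ℝ, a < l → l < b →
      |((t / Real.sqrt π) * ∫ ρ in a..b, Real.exp (-t ^ 2 * (l - ρ) ^ 2)) - 1| ≤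
        Real.exp (-(t * (l - a)) ^ 2) / (2 * Real.sqrt π * (t * (l - a))) +
          Real.exp (-(t * (b - l)) ^ 2) / (2 * Real.sqrt π * (t * (b - l)))) :=
  gaussian_mollified_indicator_right_tail_and_interior_general a b t hab ht
end

section
/- For any ρ > 0 and t > 0, ∫_{2ρ}^∞ exp(-u²/(4t²))/√(cosh u - cosh ρ) du ≤ (√(2π)·t / (√3·ρ)) · exp(-ρ²/t²). -/
/-!
On `u ≥ 2ρ` the denominator is bounded below, `cosh u - cosh ρ ≥ cosh 2ρ - cosh ρ ≥ 3ρ²/2`, and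
`u² ≥ (u - 2ρ)² + 4ρ²` splits off the factor `exp (-ρ²/t²)` from the Gaussian. What remains is a
half-line Gaussian integral, `∫₀^∞ exp (-v²/(4t²)) dv = √π t`.
-/

open Real MeasureTheory Set

lemma Real.one_add_sq_div_two_le_cosh (x : ℝ) : 1 + x ^ 2 / 2 ≤ cosh x := by
  have hsinh : |x| / 2 ≤ sinh (|x| / 2) := self_le_sinh_iff.2 (by positivity)
  have hhalf : cosh |x| = 1 + 2 * sinh (|x| / 2) ^ 2 := by
    have h := cosh_two_mul (|x| / 2)
    rw [mul_div_cancel₀ _ two_ne_zero, cosh_sq] at h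
    linarith
  rw [← cosh_abs, hhalf, ← sq_abs x]
  nlinarith [abs_nonneg x]

lemma Real.three_halves_mul_sq_le_cosh_sub_cosh {ρ u : ℝ} (h : 2 * |ρ| ≤ |u|) :
    3 / 2 * ρ ^ 2 ≤ cosh u - cosh ρ := by
  have hmono : cosh (2 * ρ) ≤ cosh u := by
    rw [cosh_le_cosh, abs_mul, abs_two]
    exact h
  have hdouble : cosh (2 * ρ) = 2 * cosh ρ ^ 2 - 1 := by
    rw [cosh_two_mul, sinh_sq]
    ring
  -- `cosh 2ρ - cosh ρ = (2 cosh ρ + 1)(cosh ρ - 1) ≥ 3 (cosh ρ - 1)`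
  nlinarith [one_add_sq_div_two_le_cosh ρ, one_le_cosh ρ]

lemma Real.exp_neg_sq_div_le_mul_exp {ρ u : ℝ} (hρ : 0 ≤ ρ) (hu : 2 * ρ ≤ u) (t : ℝ) :
    exp (-u ^ 2 / (4 * t ^ 2)) ≤ exp (-ρ ^ 2 / t ^ 2) * exp (-(u - 2 * ρ) ^ 2 / (4 * t ^ 2)) := by
  have hsq : (u - 2 * ρ) ^ 2 + 4 * ρ ^ 2 ≤ u ^ 2 := by nlinarith
  rw [← exp_add, exp_le_exp]
  calc -u ^ 2 / (4 * t ^ 2) ≤ -((u - 2 * ρ) ^ 2 + 4 * ρ ^ 2) / (4 * t ^ 2) := by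
        gcongr
    _ = -ρ ^ 2 / t ^ 2 + -(u - 2 * ρ) ^ 2 / (4 * t ^ 2) := by ring

lemma MeasureTheory.setIntegral_Ioi_comp_sub_right {E : Type*} [NormedAddCommGroup E]
    [NormedSpace ℝ E] (f : ℝ → E) (a : ℝ) :
    ∫ u in Ioi a, f (u - a) = ∫ v in Ioi 0, f v := by
  have := (measurePreserving_sub_right volume a).setIntegral_preimage_emb
    (measurableEmbedding_subRight a) f (Ioi 0)
  rwa [preimage_sub_const_Ioi, zero_add] at this

lemma Real.integral_Ioi_exp_neg_sq_div (t : ℝ) :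
    ∫ v in Ioi 0, exp (-v ^ 2 / (4 * t ^ 2)) = √π * |t| := by
  have h := integral_gaussian_Ioi (4 * t ^ 2)⁻¹
  simp only [neg_mul, ← div_eq_inv_mul, div_inv_eq_mul, ← neg_div] at h
  rw [h, sqrt_mul pi_nonneg, show 4 * t ^ 2 = (2 * |t|) ^ 2 by ring_nf; simp, sqrt_sq (by positivity)]
  ring

lemma Real.exp_div_sqrt_cosh_sub_cosh_le {ρ u : ℝ} (hρ : 0 < ρ) (hu : 2 * ρ ≤ u) (t : ℝ) :
    exp (-u ^ 2 / (4 * t ^ 2)) / √(cosh u - cosh ρ) ≤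
      exp (-ρ ^ 2 / t ^ 2) / √(3 / 2 * ρ ^ 2) * exp (-(u - 2 * ρ) ^ 2 / (4 * t ^ 2)) := by
  have hcosh : 3 / 2 * ρ ^ 2 ≤ cosh u - cosh ρ := three_halves_mul_sq_le_cosh_sub_cosh
    (by rw [abs_of_pos hρ, abs_of_pos (by linarith)]; exact hu)
  rw [div_mul_eq_mul_div]
  gcongr
  exact exp_neg_sq_div_le_mul_exp hρ.le hu t

theorem kernel_integral_far_bound (ρ t : ℝ) (hρ : 0 < ρ) (ht : 0 < t) :
    (∫ u in Set.Ioi (2 * ρ),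
        Real.exp (-u ^ 2 / (4 * t ^ 2)) / Real.sqrt (Real.cosh u - Real.cosh ρ)) ≤
      Real.sqrt (2 * π) * t / (Real.sqrt 3 * ρ) * Real.exp (-ρ ^ 2 / t ^ 2) := by
  set C := exp (-ρ ^ 2 / t ^ 2) / √(3 / 2 * ρ ^ 2) with hC
  have hgauss : Integrable fun v : ℝ ↦ exp (-v ^ 2 / (4 * t ^ 2)) := by
    simpa only [neg_mul, ← div_eq_inv_mul, ← neg_div] using
      integrable_exp_neg_mul_sq (b := (4 * t ^ 2)⁻¹) (by positivity)
  calc _ ≤ ∫ u in Ioi (2 * ρ), C * exp (-(u - 2 * ρ) ^ 2 / (4 * t ^ 2)) := by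
        refine integral_mono_of_nonneg (ae_of_all _ fun u ↦ by positivity)
          ((hgauss.comp_sub_right _).integrableOn.const_mul C) ?_
        filter_upwards [ae_restrict_mem measurableSet_Ioi] with u hu
        exact exp_div_sqrt_cosh_sub_cosh_le hρ hu.le t
    _ = C * (√π * t) := by
        rw [integral_const_mul, setIntegral_Ioi_comp_sub_right (fun v ↦ exp (-v ^ 2 / (4 * t ^ 2))),
          integral_Ioi_exp_neg_sq_div, abs_of_pos ht]
    _ = _ := by
        have hsqrt : √(3 / 2 * ρ ^ 2) = √3 / √2 * ρ := by
          rw [sqrt_mul (by norm_num), sqrt_sq hρ.le, sqrt_div (by norm_num)]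
        rw [hC, hsqrt, sqrt_mul zero_le_two]
        field_simp
end

section
/- For any ρ > 0 and t > 0, ∫_ρ^{2ρ} exp(-u²/(4t²))/√(cosh u - cosh ρ) du ≤ 2·exp(-ρ²/(4t²)). -/
/-!
For `u ≥ ρ > 0` the Gaussian factor is at most its value at `ρ`, while
`cosh u - cosh ρ = 2 sinh((u+ρ)/2) sinh((u-ρ)/2) ≥ (u² - ρ²)/2 ≥ (u - ρ) ρ`.
So the integrand is dominated by `exp(-ρ²/(4t²)) / √((u - ρ) ρ)`, whose integral over `[ρ, 2ρ]` is
exactly `2 exp(-ρ²/(4t²))`.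
-/

open Real MeasureTheory Set

theorem Real.cosh_add_sub_cosh_sub (s d : ℝ) :
    cosh (s + d) - cosh (s - d) = 2 * sinh s * sinh d := by
  rw [cosh_add, cosh_sub]
  ring

theorem Real.sq_sub_sq_div_two_le_cosh_sub_cosh {x y : ℝ} (h : |y| ≤ x) :
    (x ^ 2 - y ^ 2) / 2 ≤ cosh x - cosh y := by
  obtain ⟨hsum, hdiff⟩ : 0 ≤ x + y ∧ 0 ≤ x - y := by
    constructor <;> linarith [abs_le.1 h]
  have hsinh_sum : (x + y) / 2 ≤ sinh ((x + y) / 2) := self_le_sinh_iff.2 (by linarith)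
  have hsinh_diff : (x - y) / 2 ≤ sinh ((x - y) / 2) := self_le_sinh_iff.2 (by linarith)
  have hcosh := cosh_add_sub_cosh_sub ((x + y) / 2) ((x - y) / 2)
  rw [show (x + y) / 2 + (x - y) / 2 = x by ring, show (x + y) / 2 - (x - y) / 2 = y by ring]
    at hcosh
  rw [hcosh]
  nlinarith [mul_le_mul hsinh_sum hsinh_diff (by linarith) (by linarith)]

theorem integral_sub_rpow_neg_one_half (a b : ℝ) :
    ∫ u in a..b, (u - a) ^ (-(1 / 2 : ℝ)) = 2 * √(b - a) := by
  rw [intervalIntegral.integral_comp_sub_right (fun x ↦ x ^ (-(1 / 2 : ℝ))), sub_self,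
    integral_rpow (Or.inl (by norm_num)), zero_rpow (by norm_num), sqrt_eq_rpow]
  norm_num
  ring

theorem intervalIntegrable_sub_rpow_neg_one_half (a b : ℝ) :
    IntervalIntegrable (fun u ↦ (u - a) ^ (-(1 / 2 : ℝ))) volume a b := by
  simpa using (intervalIntegral.intervalIntegrable_rpow' (a := 0) (b := b - a)
    (r := -(1 / 2 : ℝ)) (by norm_num)).comp_sub_right a

theorem gaussian_div_sqrt_cosh_sub_cosh_le {ρ u : ℝ} (c : ℝ) (hρ : 0 < ρ) (hu : ρ < u) :
    exp (-u ^ 2 / c ^ 2) / √(cosh u - cosh ρ) ≤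
      exp (-ρ ^ 2 / c ^ 2) / √ρ * (u - ρ) ^ (-(1 / 2 : ℝ)) := by
  have hcosh : (u - ρ) * ρ ≤ cosh u - cosh ρ := by
    have := sq_sub_sq_div_two_le_cosh_sub_cosh (x := u) (y := ρ) (by rw [abs_of_pos hρ]; linarith)
    nlinarith
  calc exp (-u ^ 2 / c ^ 2) / √(cosh u - cosh ρ)
      ≤ exp (-ρ ^ 2 / c ^ 2) / √((u - ρ) * ρ) := by
        gcongr
    _ = exp (-ρ ^ 2 / c ^ 2) / √ρ * (u - ρ) ^ (-(1 / 2 : ℝ)) := by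
        rw [sqrt_mul (by linarith), rpow_neg (by linarith), ← sqrt_eq_rpow, div_mul_eq_div_div_swap,
          div_eq_mul_inv (_ / √ρ)]

theorem integral_gaussian_div_sqrt_cosh_sub_cosh_le {ρ b : ℝ} (c : ℝ) (hρ : 0 < ρ) (hb : ρ ≤ b) :
    ∫ u in ρ..b, exp (-u ^ 2 / c ^ 2) / √(cosh u - cosh ρ) ≤
      2 * exp (-ρ ^ 2 / c ^ 2) * √((b - ρ) / ρ) := by
  rw [intervalIntegral.integral_of_le hb]
  calc ∫ u in Ioc ρ b, exp (-u ^ 2 / c ^ 2) / √(cosh u - cosh ρ)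
      ≤ ∫ u in Ioc ρ b, exp (-ρ ^ 2 / c ^ 2) / √ρ * (u - ρ) ^ (-(1 / 2 : ℝ)) :=
        setIntegral_mono_of_nonneg (fun u _ ↦ by positivity)
          (fun u hu ↦ gaussian_div_sqrt_cosh_sub_cosh_le c hρ hu.1)
          ((intervalIntegrable_sub_rpow_neg_one_half ρ b).1.const_mul _)
    _ = 2 * exp (-ρ ^ 2 / c ^ 2) * √((b - ρ) / ρ) := by
        rw [integral_const_mul, ← intervalIntegral.integral_of_le hb,
          integral_sub_rpow_neg_one_half ρ b, sqrt_div' _ hρ.le]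
        ring

theorem kernel_integral_near_bound_general (ρ t : ℝ) (hρ : 0 < ρ) :
    (∫ u in ρ..2 * ρ,
        Real.exp (-u ^ 2 / (4 * t ^ 2)) / Real.sqrt (Real.cosh u - Real.cosh ρ)) ≤
      2 * Real.exp (-ρ ^ 2 / (4 * t ^ 2)) := by
  have hc : 4 * t ^ 2 = (2 * t) ^ 2 := by ring
  have h := integral_gaussian_div_sqrt_cosh_sub_cosh_le (2 * t) hρ (b := 2 * ρ) (by linarith)
  rwa [← hc, show 2 * ρ - ρ = ρ by ring, div_self hρ.ne', sqrt_one, mul_one] at h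

theorem kernel_integral_near_bound (ρ t : ℝ) (hρ : 0 < ρ) (ht : 0 < t) :
    (∫ u in ρ..2 * ρ,
        Real.exp (-u ^ 2 / (4 * t ^ 2)) / Real.sqrt (Real.cosh u - Real.cosh ρ)) ≤
      2 * Real.exp (-ρ ^ 2 / (4 * t ^ 2)) :=
  kernel_integral_near_bound_general ρ t hρ
end

section
/- For any a ≥ 0 and t > 0, ∫_{-∞}^{a - 1/t} [exp(-t²(λ-a)²)/(2√π·t(a-λ))]·(|λ| + 1/π) dλ ≤ (a+1)/(4t) + 1/(4t²). -/
open Real MeasureTheory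

/-!
On `l < a - 1/t` we have `t (a - l) ≥ 1` and `|l| + 1/π ≤ (a + 1) + (a - l)`, so the integrand is
at most `(a + 1 + 1/t) / (2√π)` times the Gaussian `exp (-t² (l - a)²)`. Enlarging the domain to
`l < a`, the half-line Gaussian integral `√π / (2t)` gives the bound.
-/

open Set in
theorem setIntegral_Iio_comp_sub_left {E : Type*} [NormedAddCommGroup E] [NormedSpace ℝ E]
    (f : ℝ → E) (a : ℝ) : ∫ x in Iio a, f (a - x) = ∫ x in Ioi 0, f x := by
  have hind : (Iio a).indicator (fun x => f (a - x)) = fun x => (Ioi 0).indicator f (a - x) := by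
    ext x; simp [indicator, sub_pos]
  rw [← integral_indicator measurableSet_Iio, hind, integral_sub_left_eq_self,
    integral_indicator measurableSet_Ioi]

theorem integral_Iio_exp_neg_mul_sq_sub (a b : ℝ) :
    ∫ x in Set.Iio a, exp (-b * (x - a) ^ 2) = √(π / b) / 2 := by
  simpa only [sub_sq_comm a] using
    (setIntegral_Iio_comp_sub_left (fun x => exp (-b * x ^ 2)) a).trans (integral_gaussian_Ioi b)

theorem abs_add_inv_pi_div_le {a t l : ℝ} (ha : 0 ≤ a) (ht : 0 < t) (hl : 1 ≤ t * (a - l)) :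
    (|l| + 1 / π) / (t * (a - l)) ≤ a + 1 + 1 / t := by
  have hal : 0 < a - l := pos_of_mul_pos_right (one_pos.trans_le hl) ht.le
  have hnum : |l| + 1 / π ≤ (a + 1) + (a - l) := by
    have : 1 / π ≤ 1 := by rw [div_le_one pi_pos]; linarith [pi_gt_three]
    cases abs_cases l <;> linarith
  calc (|l| + 1 / π) / (t * (a - l))
      ≤ ((a + 1) + (a - l)) / (t * (a - l)) := by gcongr
    _ = (a + 1) / (t * (a - l)) + 1 / t := by field_simp
    _ ≤ a + 1 + 1 / t := by gcongr; exact div_le_self (by positivity) hl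

theorem I1_integrand_le_mul_gaussian {a t l : ℝ} (ha : 0 ≤ a) (ht : 0 < t) (hl : l < a - 1 / t) :
    exp (-t ^ 2 * (l - a) ^ 2) / (2 * √π * (t * (a - l))) * (|l| + 1 / π) ≤
      (a + 1 + 1 / t) / (2 * √π) * exp (-t ^ 2 * (l - a) ^ 2) := by
  have hl' : 1 ≤ t * (a - l) := by
    rw [lt_sub_comm] at hl
    exact ((div_lt_iff₀' ht).mp hl).le
  calc exp (-t ^ 2 * (l - a) ^ 2) / (2 * √π * (t * (a - l))) * (|l| + 1 / π)
      = (|l| + 1 / π) / (t * (a - l)) / (2 * √π) * exp (-t ^ 2 * (l - a) ^ 2) := by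
        field_simp
    _ ≤ (a + 1 + 1 / t) / (2 * √π) * exp (-t ^ 2 * (l - a) ^ 2) := by
      gcongr; exact abs_add_inv_pi_div_le ha ht hl'

theorem I1_integral_bound (a t : ℝ) (ha : 0 ≤ a) (ht : 0 < t) :
    (∫ l in Set.Iio (a - 1 / t),
        Real.exp (-t ^ 2 * (l - a) ^ 2) / (2 * Real.sqrt π * (t * (a - l))) *
          (|l| + 1 / π)) ≤
      (a + 1) / (4 * t) + 1 / (4 * t ^ 2) := by
  set C := (a + 1 + 1 / t) / (2 * √π)
  have hint : Integrable fun l => C * exp (-t ^ 2 * (l - a) ^ 2) :=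
    ((integrable_exp_neg_mul_sq (by positivity)).comp_sub_right a).const_mul C
  have hlt : a - 1 / t < a := sub_lt_self a (by positivity)
  calc _ ≤ ∫ l in Set.Iio (a - 1 / t), C * exp (-t ^ 2 * (l - a) ^ 2) := by
        refine integral_mono_of_nonneg ?_ hint.integrableOn ?_ <;>
          filter_upwards [ae_restrict_mem measurableSet_Iio] with l (hl : l < a - 1 / t)
        · have : 0 < a - l := by linarith
          positivity
        · exact I1_integrand_le_mul_gaussian ha ht hl
    _ ≤ ∫ l in Set.Iio a, C * exp (-t ^ 2 * (l - a) ^ 2) :=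
        setIntegral_mono_set hint.integrableOn (.of_forall fun _ => by positivity)
          (Set.Iio_subset_Iio hlt.le).eventuallyLE
    _ = C * (√(π / t ^ 2) / 2) := by rw [integral_const_mul, integral_Iio_exp_neg_mul_sq_sub]
    _ = (a + 1) / (4 * t) + 1 / (4 * t ^ 2) := by
        rw [sqrt_div' _ (sq_nonneg t), sqrt_sq ht.le]
        simp only [C]
        field_simp
        ring
end

section
/- Let t > 0 and let (λ_j)_{j≥0} be a sequence of non-negative reals, and let b ≥ 0. Suppose there is a constant M such that for every k ≥ 0, the number of indices j with b + k/t ≤ λ_j ≤ b + (k+1)/t is at most M·(k+1). Then ∑_{λ_j > b} h_t(λ_j) ≤ M·(1 + ∑_{k=1}^∞ (k+1)·exp(-k²)/(2√π·k)), where h_t(λ) = (t/√π)∫_a^b exp(-t²(λ-ρ)²) dρ for some 0 ≤ a ≤ b. -/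
/-!
`0 ≤ h_t ≤ 1`, and for `λ > b` the Gaussian tail estimate gives `h_t(λ) ≤ s(t(λ - b))` with
`s(ρ) = exp(-ρ²) / (2√π ρ)` decreasing on `(0, ∞)`. Hence each `λ_j` in the bracket
`[b + k/t, b + (k+1)/t]` contributes at most `1` if `k = 0` and at most `s(k)` if `k ≥ 1`;
the brackets cover `(b, ∞)` and the `k`-th one holds at most `M (k + 1)` of the `λ_j`.
-/

open Real MeasureTheory

/-- The paper's `h_t(l)`; `gaussTail` below is its `s`. -/
noncomputable def gaussWindow (t a b l : ℝ) : ℝ :=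
  t / √π * ∫ ρ in a..b, exp (-t ^ 2 * (l - ρ) ^ 2)

noncomputable def gaussTail (x : ℝ) : ℝ :=
  exp (-x ^ 2) / (2 * √π * x)

lemma gaussWindow_nonneg {t : ℝ} (ht : 0 ≤ t) {a b : ℝ} (hab : a ≤ b) (l : ℝ) :
    0 ≤ gaussWindow t a b l :=
  mul_nonneg (by positivity) (intervalIntegral.integral_nonneg hab fun _ _ => (exp_pos _).le)

lemma integrable_exp_neg_mul_sub_sq {t : ℝ} (ht : 0 < t) (l : ℝ) :
    Integrable fun ρ => exp (-t ^ 2 * (l - ρ) ^ 2) :=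
  (integrable_exp_neg_mul_sq (pow_pos ht 2)).comp_sub_left l

lemma integral_exp_neg_mul_sub_sq {t : ℝ} (ht : 0 < t) (l : ℝ) :
    ∫ ρ, exp (-t ^ 2 * (l - ρ) ^ 2) = √π / t := by
  rw [integral_sub_left_eq_self (fun x => exp (-t ^ 2 * x ^ 2)), integral_gaussian,
    sqrt_div pi_pos.le, sqrt_sq ht.le]

lemma gaussWindow_le_one {t : ℝ} (ht : 0 < t) {a b : ℝ} (hab : a ≤ b) (l : ℝ) :
    gaussWindow t a b l ≤ 1 := by
  have hint : ∫ ρ in a..b, exp (-t ^ 2 * (l - ρ) ^ 2) ≤ √π / t := by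
    rw [intervalIntegral.integral_of_le hab, ← integral_exp_neg_mul_sub_sq ht l]
    exact setIntegral_le_integral (integrable_exp_neg_mul_sub_sq ht l)
      (.of_forall fun _ => (exp_pos _).le)
  calc gaussWindow t a b l ≤ t / √π * (√π / t) := by
        unfold gaussWindow; gcongr
    _ = 1 := by field_simp

/-- The weight `(l - ρ) / (l - b) ≥ 1` on `[a, b]` turns the integrand into an exact
derivative. -/
lemma integral_exp_neg_mul_sub_sq_le {t a b l : ℝ} (ht : 0 < t) (hab : a ≤ b) (hbl : b < l) :
    ∫ ρ in a..b, exp (-t ^ 2 * (l - ρ) ^ 2) ≤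
      exp (-t ^ 2 * (l - b) ^ 2) / (2 * t ^ 2 * (l - b)) := by
  have hlb : 0 < l - b := sub_pos.2 hbl
  have hderiv : ∀ ρ, HasDerivAt (fun ρ => exp (-t ^ 2 * (l - ρ) ^ 2) / (2 * t ^ 2 * (l - b)))
      ((l - ρ) / (l - b) * exp (-t ^ 2 * (l - ρ) ^ 2)) ρ := fun ρ => by
    have hsq : HasDerivAt (fun ρ => -t ^ 2 * (l - ρ) ^ 2) (2 * t ^ 2 * (l - ρ)) ρ := by
      simpa [mul_comm, mul_assoc, mul_left_comm] using
        (((hasDerivAt_id' ρ).const_sub l).pow 2).const_mul (-t ^ 2)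
    exact (hsq.exp.div_const _).congr_deriv (by field_simp)
  have hcont : Continuous fun ρ => (l - ρ) / (l - b) * exp (-t ^ 2 * (l - ρ) ^ 2) := by fun_prop
  calc ∫ ρ in a..b, exp (-t ^ 2 * (l - ρ) ^ 2)
      ≤ ∫ ρ in a..b, (l - ρ) / (l - b) * exp (-t ^ 2 * (l - ρ) ^ 2) := by
        refine intervalIntegral.integral_mono_on hab
          ((by fun_prop : Continuous _).intervalIntegrable a b) (hcont.intervalIntegrable a b)
          fun ρ hρ => le_mul_of_one_le_left (exp_pos _).le ?_
        rw [one_le_div hlb]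
        linarith [hρ.2]
    _ = exp (-t ^ 2 * (l - b) ^ 2) / (2 * t ^ 2 * (l - b)) -
          exp (-t ^ 2 * (l - a) ^ 2) / (2 * t ^ 2 * (l - b)) :=
        intervalIntegral.integral_eq_sub_of_hasDerivAt (fun ρ _ => hderiv ρ)
          (hcont.intervalIntegrable a b)
    _ ≤ exp (-t ^ 2 * (l - b) ^ 2) / (2 * t ^ 2 * (l - b)) := sub_le_self _ (by positivity)

lemma gaussWindow_le_gaussTail {t a b l : ℝ} (ht : 0 < t) (hab : a ≤ b) (hbl : b < l) :
    gaussWindow t a b l ≤ gaussTail (t * (l - b)) := by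
  have hlb : 0 < l - b := sub_pos.2 hbl
  calc gaussWindow t a b l
      ≤ t / √π * (exp (-t ^ 2 * (l - b) ^ 2) / (2 * t ^ 2 * (l - b))) := by
        unfold gaussWindow; gcongr; exact integral_exp_neg_mul_sub_sq_le ht hab hbl
    _ = gaussTail (t * (l - b)) := by
        unfold gaussTail
        field_simp

lemma gaussTail_antitoneOn : AntitoneOn gaussTail (Set.Ioi 0) := by
  intro x (hx : 0 < x) y (hy : 0 < y) hxy
  unfold gaussTail
  exact div_le_div₀ (exp_pos _).le (exp_le_exp.2 (by nlinarith)) (by positivity) (by gcongr)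

/-- The bound for `gaussWindow` on the `k`-th bracket; at `k = 0` the tail bound is useless
(and `gaussTail 0 = 0` is a junk value), so `gaussWindow ≤ 1` is used there. -/
noncomputable def bracketBound : ℕ → ℝ
  | 0 => 1
  | k + 1 => gaussTail (k + 1)

lemma gaussWindow_le_bracketBound {t a b l : ℝ} (ht : 0 < t) (hab : a ≤ b) {k : ℕ}
    (hk : b + k / t ≤ l) : gaussWindow t a b l ≤ bracketBound k := by
  cases k with
  | zero => exact gaussWindow_le_one ht hab l
  | succ k =>
    have hk1 : (0 : ℝ) < k + 1 := by positivity
    have hkt : (k + 1 : ℝ) ≤ t * (l - b) := by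
      push_cast at hk
      rw [← div_le_iff₀' ht]
      linarith
    calc gaussWindow t a b l ≤ gaussTail (t * (l - b)) :=
          gaussWindow_le_gaussTail ht hab (by nlinarith)
      _ ≤ gaussTail (k + 1) := gaussTail_antitoneOn hk1 (hk1.trans_le hkt) hkt

lemma summable_succ_add_one_mul_gaussTail :
    Summable fun k : ℕ => ((k : ℝ) + 1 + 1) * gaussTail (k + 1) := by
  refine Summable.of_nonneg_of_le (fun k => ?_) (fun k => ?_) summable_exp_neg_nat
  · unfold gaussTail; positivity
  · have hπ : 1 ≤ √π := one_le_sqrt.2 (by linarith [pi_gt_three])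
    have hk : (0 : ℝ) ≤ k := k.cast_nonneg
    calc ((k : ℝ) + 1 + 1) * gaussTail (k + 1)
        = (k + 1 + 1) / (2 * √π * (k + 1)) * exp (-(k + 1) ^ 2) := by
          unfold gaussTail; ring
      _ ≤ 1 * exp (-k) := by
          gcongr
          · rw [div_le_one (by positivity)]; nlinarith
          · nlinarith
      _ = exp (-k) := one_mul _

lemma exists_nat_div_le_and_le_succ_div {t x : ℝ} (ht : 0 < t) (hx : 0 ≤ x) :
    ∃ k : ℕ, k / t ≤ x ∧ x ≤ (k + 1) / t :=
  ⟨⌊t * x⌋₊, by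
    rw [div_le_iff₀' ht, le_div_iff₀' ht]
    exact ⟨Nat.floor_le (by positivity), (Nat.lt_floor_add_one _).le⟩⟩

lemma summable_and_tsum_le_of_tsum_ofReal_le {α : Type*} {g : α → ℝ} (hg : ∀ x, 0 ≤ g x)
    {B : ℝ} (hB : 0 ≤ B) (h : ∑' x, ENNReal.ofReal (g x) ≤ ENNReal.ofReal B) :
    Summable g ∧ ∑' x, g x ≤ B := by
  have hs : Summable g := by
    simpa [ENNReal.toReal_ofReal (hg _)] using
      ENNReal.summable_toReal (ne_top_of_le_ne_top ENNReal.ofReal_ne_top h)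
  rw [← ENNReal.ofReal_tsum_of_nonneg hg hs, ENNReal.ofReal_le_ofReal_iff hB] at h
  exact ⟨hs, h⟩

lemma summable_and_tsum_subtype_le_of_cover {ι : Type*} {S : Set ι} {T : ℕ → Set ι}
    (hST : S ⊆ ⋃ k, T k) {f : ι → ℝ} (hf : ∀ j, 0 ≤ f j) {c N : ℕ → ℝ} (hc : ∀ k, 0 ≤ c k)
    (hT : ∀ k, (T k).Finite ∧ ((T k).ncard : ℝ) ≤ N k) (hfc : ∀ k, ∀ j ∈ T k, f j ≤ c k)
    (hNc : Summable fun k => N k * c k) :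
    Summable (fun j : S => f j) ∧ ∑' j : S, f j ≤ ∑' k, N k * c k := by
  have hN : ∀ k, 0 ≤ N k := fun k => (Nat.cast_nonneg _).trans (hT k).2
  refine summable_and_tsum_le_of_tsum_ofReal_le (g := fun j : S => f j) (fun j => hf j)
    (tsum_nonneg fun k => mul_nonneg (hN k) (hc k)) ?_
  calc ∑' j : S, ENNReal.ofReal (f j)
      ≤ ∑' j : ⋃ k, T k, ENNReal.ofReal (f j) :=
        ENNReal.tsum_mono_subtype (fun j => ENNReal.ofReal (f j)) hST
    _ ≤ ∑' k, ∑' j : T k, ENNReal.ofReal (f j) :=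
        ENNReal.tsum_iUnion_le_tsum (fun j => ENNReal.ofReal (f j)) T
    _ ≤ ∑' k, ∑' _ : T k, ENNReal.ofReal (c k) :=
        ENNReal.tsum_le_tsum fun k => ENNReal.tsum_le_tsum fun j =>
          ENNReal.ofReal_le_ofReal (hfc k j j.2)
    _ = ∑' k, ENNReal.ofReal ((T k).ncard * c k) := by
        refine tsum_congr fun k => ?_
        rw [ENNReal.tsum_set_const, ← (hT k).1.cast_ncard_eq,
          ENNReal.ofReal_mul (Nat.cast_nonneg _), ENNReal.ofReal_natCast]
        rfl
    _ ≤ ∑' k, ENNReal.ofReal (N k * c k) :=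
        ENNReal.tsum_le_tsum fun k => ENNReal.ofReal_le_ofReal
          (mul_le_mul_of_nonneg_right (hT k).2 (hc k))
    _ = ENNReal.ofReal (∑' k, N k * c k) :=
        (ENNReal.ofReal_tsum_of_nonneg (fun k => mul_nonneg (hN k) (hc k)) hNc).symm

theorem sum_ht_above_b_bound_general (t : ℝ) (ht : 0 < t) (lam : ℕ → ℝ)
    (a b : ℝ) (hab : a ≤ b) (M : ℝ)
    (hcount : ∀ k : ℕ,
      {j : ℕ | b + k / t ≤ lam j ∧ lam j ≤ b + (k + 1) / t}.Finite ∧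
        ({j : ℕ | b + k / t ≤ lam j ∧ lam j ≤ b + (k + 1) / t}.ncard : ℝ) ≤ M * (k + 1)) :
    Summable (fun j : {j : ℕ // b < lam j} =>
        (t / Real.sqrt π) * ∫ ρ in a..b, Real.exp (-t ^ 2 * (lam j - ρ) ^ 2)) ∧
      (∑' j : {j : ℕ // b < lam j},
          (t / Real.sqrt π) * ∫ ρ in a..b, Real.exp (-t ^ 2 * (lam j - ρ) ^ 2)) ≤
        M * (1 + ∑' k : ℕ,
          (((k : ℝ) + 1) + 1) * Real.exp (-((k : ℝ) + 1) ^ 2) /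
            (2 * Real.sqrt π * ((k : ℝ) + 1))) := by
  have hcover :
      {j | b < lam j} ⊆ ⋃ k : ℕ, {j | b + k / t ≤ lam j ∧ lam j ≤ b + (k + 1) / t} :=
    fun j (hj : b < lam j) => by
      obtain ⟨k, hk⟩ := exists_nat_div_le_and_le_succ_div ht (sub_nonneg.2 hj.le)
      exact Set.mem_iUnion.2 ⟨k, by constructor <;> linarith [hk.1, hk.2]⟩
  have hsummable : Summable fun k : ℕ => M * (k + 1) * bracketBound k := by
    refine (summable_nat_add_iff 1).1 ?_
    simpa [bracketBound, mul_assoc] using summable_succ_add_one_mul_gaussTail.mul_left M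
  have htsum : ∑' k : ℕ, M * (k + 1) * bracketBound k = M * (1 + ∑' k : ℕ,
      (((k : ℝ) + 1) + 1) * exp (-((k : ℝ) + 1) ^ 2) / (2 * √π * ((k : ℝ) + 1))) := by
    rw [hsummable.tsum_eq_zero_add]
    conv_rhs => rw [mul_add, ← tsum_mul_left]
    congr 1
    · simp [bracketBound]
    · exact tsum_congr fun k => by push_cast [bracketBound, gaussTail]; ring
  rw [← htsum]
  exact summable_and_tsum_subtype_le_of_cover hcover (gaussWindow_nonneg ht.le hab <| lam ·)
    (fun k => by cases k <;> simp only [bracketBound, gaussTail] <;> positivity) hcount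
    (fun k j hj => gaussWindow_le_bracketBound ht hab hj.1) hsummable

theorem sum_ht_above_b_bound (t : ℝ) (ht : 0 < t) (lam : ℕ → ℝ)
    (hlam : ∀ j, 0 ≤ lam j) (a b : ℝ) (ha : 0 ≤ a) (hab : a ≤ b) (hb : 0 ≤ b) (M : ℝ)
    (hcount : ∀ k : ℕ,
      {j : ℕ | b + k / t ≤ lam j ∧ lam j ≤ b + (k + 1) / t}.Finite ∧
        ({j : ℕ | b + k / t ≤ lam j ∧ lam j ≤ b + (k + 1) / t}.ncard : ℝ) ≤ M * (k + 1)) :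
    Summable (fun j : {j : ℕ // b < lam j} =>
        (t / Real.sqrt π) * ∫ ρ in a..b, Real.exp (-t ^ 2 * (lam j - ρ) ^ 2)) ∧
      (∑' j : {j : ℕ // b < lam j},
          (t / Real.sqrt π) * ∫ ρ in a..b, Real.exp (-t ^ 2 * (lam j - ρ) ^ 2)) ≤
        M * (1 + ∑' k : ℕ,
          (((k : ℝ) + 1) + 1) * Real.exp (-((k : ℝ) + 1) ^ 2) /
            (2 * Real.sqrt π * ((k : ℝ) + 1))) :=
  sum_ht_above_b_bound_general t ht lam a b hab M hcount
end
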